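/- arXiv:2502.00525 — 3 statements merged into one kernel-verified Lean document; each statement's English description precedes it below -/
import Mathlib

section
/- Let 0 < μ < 1/2, let α_1 ≥ α_2 ≥ ⋯ ≥ α_N > 0 (after relabeling), let I_i = {1,…,i} (with I_0 = ∅), and let k be the smallest index i ∈ {0,…,N-1} such that (N - i - 2μ)√(α_{i+1}) < ∑_{j∉I_i} √(α_j). Define p̄ ∈ ℝ^N by p̄_i = 0 for i ∈ I_k and p̄_i = (1/(2μ))[1 - (N - k - 2μ)√(α_i)/∑_{j∉I_k}√(α_j)] for i ∉ I_k. Then p̄ lies in the simplex Δ_N and maximizes φ(p) = ∑_{i=1}^N (p_i/(2μp_i - 1))α_i over Δ_N. -/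
/-!
The objective is a sum of terms `x ↦ x / (2μx - 1) · αᵢ`, each concave on `2μx < 1`, so the
tangent-line inequality turns the KKT conditions into a certificate of global optimality: with
multiplier `τ = (S / c)²`, where `S = ∑_{j ≥ k} √αⱼ` and `c = N - k - 2μ`, the point `p̄` satisfies
`αᵢ / (2μp̄ᵢ - 1)² = τ` on its support `i ≥ k`. Off the support the KKT condition is `τ ≤ αᵢ`,
i.e. `S ≤ c √αᵢ`, which is exactly what the minimality of `k` gives at `k - 1`; nonnegativity of
`p̄` on the support is the defining inequality of `k`, propagated by monotonicity of `α`.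
-/

open Finset

theorem div_two_mul_sub_one_mul_le_tangent {μ A : ℝ} (hμ : 0 ≤ μ) (hA : 0 ≤ A) {a b : ℝ}
    (ha : 2 * μ * a < 1) (hb : 2 * μ * b < 1) :
    a / (2 * μ * a - 1) * A ≤
      b / (2 * μ * b - 1) * A - A / (2 * μ * b - 1) ^ 2 * (a - b) := by
  have hu : 2 * μ * a - 1 < 0 := by linarith
  have hv : 2 * μ * b - 1 < 0 := by linarith
  have hv2 : (2 * μ * b - 1) * (2 * μ * b - 1) ^ 2 ≠ 0 :=
    mul_ne_zero hv.ne (pow_ne_zero 2 hv.ne)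
  have hden : 0 < -(2 * μ * a - 1) * (2 * μ * b - 1) ^ 2 :=
    mul_pos (neg_pos.mpr hu) (sq_pos_of_neg hv)
  have hgap : b / (2 * μ * b - 1) * A - A / (2 * μ * b - 1) ^ 2 * (a - b) -
      a / (2 * μ * a - 1) * A =
        2 * μ * A * (a - b) ^ 2 / (-(2 * μ * a - 1) * (2 * μ * b - 1) ^ 2) := by
    rw [div_mul_eq_mul_div, div_mul_eq_mul_div, div_mul_eq_mul_div,
      div_sub_div _ _ hv.ne (pow_ne_zero 2 hv.ne), div_sub_div _ _ hv2 hu.ne,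
      div_eq_div_iff (mul_ne_zero hv2 hu.ne) hden.ne']
    ring
  rw [← sub_nonneg, hgap]
  positivity

/-- `τ` is the negated multiplier `τ` of the KKT system `αᵢ (2μpᵢ - 1)⁻² + τ - ηᵢ = 0`, so off the
support (`pᵢ = 0`, slack `ηᵢ ≥ 0`) stationarity reads `τ ≤ a`. -/
def KKTCoord (μ τ a p : ℝ) : Prop :=
  0 ≤ p ∧ 2 * μ * p < 1 ∧ (a / (2 * μ * p - 1) ^ 2 = τ ∨ (p = 0 ∧ τ ≤ a))

theorem kktCoord_zero {μ τ a : ℝ} (h : τ ≤ a) : KKTCoord μ τ a 0 :=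
  ⟨le_rfl, by simp, Or.inr ⟨rfl, h⟩⟩

theorem sum_div_two_mul_sub_one_mul_le_of_kktCoord {ι : Type*} {s : Finset ι} {α p q : ι → ℝ}
    {μ τ : ℝ} (hμ0 : 0 ≤ μ) (hμ : μ < 1 / 2) (hα : ∀ i ∈ s, 0 ≤ α i)
    (hkkt : ∀ i ∈ s, KKTCoord μ τ (α i) (p i)) (hp1 : ∑ i ∈ s, p i = 1)
    (hq0 : ∀ i ∈ s, 0 ≤ q i) (hq1 : ∑ i ∈ s, q i = 1) :
    ∑ i ∈ s, q i / (2 * μ * q i - 1) * α i ≤ ∑ i ∈ s, p i / (2 * μ * p i - 1) * α i := by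
  have hq : ∀ i ∈ s, 2 * μ * q i < 1 := fun i hi => by
    have : q i ≤ 1 := hq1 ▸ single_le_sum hq0 hi
    nlinarith [hq0 i hi]
  have hterm : ∀ i ∈ s, q i / (2 * μ * q i - 1) * α i + τ * q i ≤
      p i / (2 * μ * p i - 1) * α i + τ * p i := by
    intro i hi
    obtain ⟨-, hp, hgrad | ⟨hpi, hτ⟩⟩ := hkkt i hi
    · have htan := div_two_mul_sub_one_mul_le_tangent hμ0 (hα i hi) (hq i hi) hp
      rw [hgrad] at htan
      linarith
    · have htan := div_two_mul_sub_one_mul_le_tangent hμ0 (hα i hi) (hq i hi) hp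
      simp only [hpi, mul_zero, zero_sub, zero_div, zero_mul, even_two, Even.neg_pow, one_pow,
        div_one, sub_zero] at htan ⊢
      nlinarith [hq0 i hi]
  have := sum_le_sum hterm
  rw [sum_add_distrib, sum_add_distrib, ← mul_sum, ← mul_sum, hq1, hp1] at this
  linarith

theorem sum_inv_two_mul_mul_one_sub_eq_one {ι : Type*} (t : Finset ι) (w : ι → ℝ) {μ : ℝ}
    (hμ : μ ≠ 0) (hw : ∑ j ∈ t, w j ≠ 0) :
    ∑ i ∈ t, 1 / (2 * μ) * (1 - ((#t : ℝ) - 2 * μ) * w i / ∑ j ∈ t, w j) = 1 := by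
  simp_rw [← mul_sum, sum_sub_distrib, mul_div_assoc, ← mul_sum, ← sum_div, div_self hw,
    sum_const, nsmul_eq_mul]
  field_simp
  ring

theorem kktCoord_of_mul_sqrt_lt {μ c S a : ℝ} (hμ : 0 < μ) (hc : 0 < c) (hS : 0 < S)
    (ha : 0 < a) (h : c * √a < S) :
    KKTCoord μ ((S / c) ^ 2) a (1 / (2 * μ) * (1 - c * √a / S)) := by
  have hx0 : 0 < c * √a / S := by have := Real.sqrt_pos.mpr ha; positivity
  have hx1 : c * √a / S < 1 := (div_lt_one hS).mpr h
  have hlin : 2 * μ * (1 / (2 * μ) * (1 - c * √a / S)) - 1 = -(c * √a / S) := by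
    field_simp
    ring
  refine ⟨by have := sub_pos.mpr hx1; positivity, by linarith, Or.inl ?_⟩
  rw [hlin, neg_sq, div_pow, mul_pow, Real.sq_sqrt ha.le]
  field_simp

theorem sq_div_le_of_le_mul_sqrt {c S a : ℝ} (hc : 0 < c) (hS : 0 ≤ S) (ha : 0 ≤ a)
    (h : S ≤ c * √a) : (S / c) ^ 2 ≤ a := by
  rw [← Real.le_sqrt (by positivity) ha, div_le_iff₀ hc, mul_comm]
  exact h

theorem sum_sqrt_le_mul_sqrt_of_not_lt {α : ℕ → ℝ} {N k i : ℕ} {μ : ℝ}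
    (hsorted : ∀ i j, i ≤ j → j < N → α j ≤ α i) (hkN : k < N)
    (hc : 0 ≤ (N : ℝ) - k - 2 * μ) (hik : i < k)
    (hprev : ¬(((N : ℝ) - ↑(k - 1) - 2 * μ) * √(α (k - 1)) <
      ∑ j ∈ Ico (k - 1) N, √(α j))) :
    ∑ j ∈ Ico k N, √(α j) ≤ ((N : ℝ) - k - 2 * μ) * √(α i) := by
  obtain ⟨m, rfl⟩ : ∃ m, k = m + 1 := ⟨k - 1, by omega⟩
  rw [Nat.add_sub_cancel, sum_eq_sum_Ico_succ_bot (by omega), not_lt] at hprev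
  push_cast at hc ⊢
  have hmono : √(α m) ≤ √(α i) := Real.sqrt_le_sqrt (hsorted i m (by omega) (by omega))
  nlinarith [Real.sqrt_nonneg (α m)]

/-- Statement of Proposition on the explicit maximizer of
`φ(p) = ∑ i, (p i / (2 μ p i - 1)) α i` over the simplex.
Indices are 0-based: `α 0 ≥ α 1 ≥ ⋯ ≥ α (N-1) > 0`, `I_i = {0, …, i-1}`,
and the complement of `I_i` inside `{0, …, N-1}` is `Finset.Ico i N`. -/
theorem stmt_12 (N : ℕ) (hN : 0 < N) (μ : ℝ) (hμ0 : 0 < μ) (hμ : μ < 1 / 2)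
    (α : ℕ → ℝ) (hαpos : ∀ i < N, 0 < α i)
    (hαsorted : ∀ i j, i ≤ j → j < N → α j ≤ α i)
    (k : ℕ) (hkN : k ≤ N - 1)
    (hk : ((N : ℝ) - k - 2 * μ) * Real.sqrt (α k) <
      ∑ j ∈ Finset.Ico k N, Real.sqrt (α j))
    (hkmin : ∀ i < k, ¬(((N : ℝ) - i - 2 * μ) * Real.sqrt (α i) <
      ∑ j ∈ Finset.Ico i N, Real.sqrt (α j)))
    (pbar : ℕ → ℝ)
    (hpbar : ∀ i < N, pbar i =
      if i < k then 0
      else (1 / (2 * μ)) *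
        (1 - ((N : ℝ) - k - 2 * μ) * Real.sqrt (α i) /
          ∑ j ∈ Finset.Ico k N, Real.sqrt (α j))) :
    (∀ i < N, 0 ≤ pbar i) ∧ (∑ i ∈ Finset.range N, pbar i = 1) ∧
      ∀ q : ℕ → ℝ, (∀ i < N, 0 ≤ q i) → (∑ i ∈ Finset.range N, q i = 1) →
        (∑ i ∈ Finset.range N, q i / (2 * μ * q i - 1) * α i) ≤
          ∑ i ∈ Finset.range N, pbar i / (2 * μ * pbar i - 1) * α i := by
  have hkN' : k < N := by omega
  set S := ∑ j ∈ Ico k N, √(α j)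
  set c := (N : ℝ) - k - 2 * μ
  have hcpos : 0 < c := by
    have : (k : ℝ) + 1 ≤ N := by exact_mod_cast hkN'
    linarith
  have hSpos : 0 < S :=
    sum_pos (fun j hj => Real.sqrt_pos.mpr (hαpos j (mem_Ico.mp hj).2))
      ⟨k, mem_Ico.mpr ⟨le_rfl, hkN'⟩⟩
  have hkkt : ∀ i < N, KKTCoord μ ((S / c) ^ 2) (α i) (pbar i) := by
    intro i hiN
    rw [hpbar i hiN]
    split_ifs with hik
    · exact kktCoord_zero <| sq_div_le_of_le_mul_sqrt hcpos hSpos.le (hαpos i hiN).le <|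
        sum_sqrt_le_mul_sqrt_of_not_lt hαsorted hkN' hcpos.le hik (hkmin (k - 1) (by omega))
    · have hαi : α i ≤ α k := hαsorted k i (not_lt.mp hik) hiN
      exact kktCoord_of_mul_sqrt_lt hμ0 hcpos hSpos (hαpos i hiN) <|
        (mul_le_mul_of_nonneg_left (Real.sqrt_le_sqrt hαi) hcpos.le).trans_lt hk
  have hsum : ∑ i ∈ range N, pbar i = 1 := by
    rw [range_eq_Ico, ← sum_Ico_consecutive _ (Nat.zero_le k) hkN'.le,
      sum_eq_zero fun i hi => by
        rw [hpbar i (by simp at hi; omega), if_pos (mem_Ico.mp hi).2],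
      zero_add,
      ← sum_inv_two_mul_mul_one_sub_eq_one (Ico k N) (fun j => √(α j)) hμ0.ne' hSpos.ne']
    refine sum_congr rfl fun i hi => ?_
    obtain ⟨hki, hiN⟩ := mem_Ico.mp hi
    rw [hpbar i hiN, if_neg (not_lt.mpr hki), Nat.card_Ico, Nat.cast_sub hkN'.le]
  refine ⟨fun i hi => (hkkt i hi).1, hsum, fun q hq0 hq1 => ?_⟩
  simp only [← mem_range] at hαpos hkkt hq0
  exact sum_div_two_mul_sub_one_mul_le_of_kktCoord hμ0.le hμ (fun i hi => (hαpos i hi).le) hkkt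
    hsum hq0 hq1
end

section
/- Let f : ℝ^n → ℝ be lower semicontinuous, V a closed subspace of ℝ^n, B a compact convex set, and P : ℝ^n → ℝ lower semicontinuous with P ≥ 0 and P(x) = 0 iff x ∈ B. Let λ_k → +∞ be strictly increasing positive reals, and for each k let x_k minimize f + λ_k P over V. Then any cluster point x̄ of (x_k) belongs to V ∩ B and minimizes f over V ∩ B. -/
/-!
Testing the minimality of `x k` against a point `y ∈ V ∩ B`, where `P y = 0`, gives
`f (x k) + λ_k P (x k) ≤ f y`. Since `λ_k → ∞` while `f` stays bounded below near `x̄`, this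
forces `P x̄ = 0`; and since eventually `λ_k P (x k) ≥ 0`, it gives `f (x k) ≤ f y`, which passes to the
cluster point because the sublevel sets of `f` are closed.
-/

open Filter Topology

theorem nonpos_of_mapClusterPt_of_add_mul_le {X ι : Type*} [TopologicalSpace X] {l : Filter ι}
    {f P : X → ℝ} {lam : ι → ℝ} {x : ι → X} {a : X} {C : ℝ}
    (hf : LowerSemicontinuousAt f a) (hP : LowerSemicontinuousAt P a)
    (hlam : Tendsto lam l atTop) (ha : MapClusterPt a l x)
    (hC : ∀ k, f (x k) + lam k * P (x k) ≤ C) : P a ≤ 0 := by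
  by_contra! hPa
  have hnear : ∀ᶠ z in 𝓝 a, f a - 1 < f z ∧ P a / 2 < P z :=
    (hf _ (sub_one_lt _)).and (hP _ (half_lt_self hPa))
  have hlarge : ∀ᶠ k in l, 0 ≤ lam k ∧ (C - f a + 1) / (P a / 2) < lam k :=
    (hlam.eventually_ge_atTop 0).and (hlam.eventually_gt_atTop _)
  obtain ⟨k, ⟨hfk, hPk⟩, hlam0, hlamk⟩ := ((ha.frequently hnear).and_eventually hlarge).exists
  rw [div_lt_iff₀ (half_pos hPa)] at hlamk
  nlinarith [hC k, mul_le_mul_of_nonneg_left hPk.le hlam0]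

theorem stmt_17_general (n : ℕ) (f P : (Fin n → ℝ) → ℝ)
    (hf : LowerSemicontinuous f) (hPlsc : LowerSemicontinuous P)
    (V : Submodule ℝ (Fin n → ℝ)) (hV : IsClosed (V : Set (Fin n → ℝ)))
    (B : Set (Fin n → ℝ))
    (hP0 : ∀ x, 0 ≤ P x) (hPiff : ∀ x, P x = 0 ↔ x ∈ B)
    (hVB : ((V : Set (Fin n → ℝ)) ∩ B).Nonempty)
    (lam : ℕ → ℝ)
    (hlamtop : Tendsto lam atTop atTop)
    (x : ℕ → Fin n → ℝ) (hxV : ∀ k, x k ∈ V)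
    (hxmin : ∀ k, ∀ y ∈ V, f (x k) + lam k * P (x k) ≤ f y + lam k * P y)
    (xbar : Fin n → ℝ) (hcluster : MapClusterPt xbar atTop x) :
    xbar ∈ (V : Set (Fin n → ℝ)) ∩ B ∧ ∀ y ∈ (V : Set (Fin n → ℝ)) ∩ B, f xbar ≤ f y := by
  have hbound : ∀ k, ∀ y ∈ (V : Set (Fin n → ℝ)) ∩ B, f (x k) + lam k * P (x k) ≤ f y :=
    fun k y hy => by simpa [(hPiff y).2 hy.2] using hxmin k y hy.1
  obtain ⟨y₀, hy₀⟩ := hVB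
  have hxbarV : xbar ∈ V := hV.mem_of_mapClusterPt hcluster (.of_forall hxV)
  have hxbarB : xbar ∈ B := (hPiff xbar).1 <| le_antisymm
    (nonpos_of_mapClusterPt_of_add_mul_le (hf xbar) (hPlsc xbar) hlamtop hcluster
      (hbound · y₀ hy₀))
    (hP0 xbar)
  refine ⟨⟨hxbarV, hxbarB⟩, fun y hy =>
    (hf.isClosed_preimage (f y)).mem_of_mapClusterPt hcluster ?_⟩
  filter_upwards [hlamtop.eventually_ge_atTop 0] with k hk
  show f (x k) ≤ f y
  linarith [hbound k y hy, mul_nonneg hk (hP0 (x k))]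

theorem stmt_17 (n : ℕ) (f P : (Fin n → ℝ) → ℝ)
    (hf : LowerSemicontinuous f) (hPlsc : LowerSemicontinuous P)
    (V : Submodule ℝ (Fin n → ℝ)) (hV : IsClosed (V : Set (Fin n → ℝ)))
    (B : Set (Fin n → ℝ)) (hBc : IsCompact B) (hBconv : Convex ℝ B)
    (hP0 : ∀ x, 0 ≤ P x) (hPiff : ∀ x, P x = 0 ↔ x ∈ B)
    (hVB : ((V : Set (Fin n → ℝ)) ∩ B).Nonempty)
    (lam : ℕ → ℝ) (hlampos : ∀ k, 0 < lam k) (hlammono : StrictMono lam)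
    (hlamtop : Tendsto lam atTop atTop)
    (x : ℕ → Fin n → ℝ) (hxV : ∀ k, x k ∈ V)
    (hxmin : ∀ k, ∀ y ∈ V, f (x k) + lam k * P (x k) ≤ f y + lam k * P y)
    (xbar : Fin n → ℝ) (hcluster : MapClusterPt xbar atTop x) :
    xbar ∈ (V : Set (Fin n → ℝ)) ∩ B ∧ ∀ y ∈ (V : Set (Fin n → ℝ)) ∩ B, f xbar ≤ f y :=
  stmt_17_general n f P hf hPlsc V hV B hP0 hPiff hVB lam hlamtop x hxV hxmin xbar hcluster
end

section
/- Let g : H → ℝ ∪ {+∞} be proper on a real Hilbert space H and satisfy g(x) ≥ -(θ/2)(1 + ‖x‖²) for all x, where θ > 0. Fix x_0 ∈ dom g and set M = max{0, g(x_0)} + 2‖x_0‖² + 1/2 and μ_0 = min{1/(2θ), 1/(1+θ)}. Then for every μ ∈ (0, μ_0), every x ∈ H, and every minimizer y of w ↦ g(w) + (1/(2μ))‖w - x‖², one has ‖y‖² ≤ 4(M + 5‖x‖²). -/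
set_option maxHeartbeats 800000 in
theorem stmt_19 {H : Type*} [NormedAddCommGroup H] [InnerProductSpace ℝ H] [CompleteSpace H]
    (g : H → EReal) (hbot : ∀ x, g x ≠ ⊥)
    (θ : ℝ) (hθ : 0 < θ)
    (hlb : ∀ x : H, ((-(θ / 2) * (1 + ‖x‖ ^ 2) : ℝ) : EReal) ≤ g x)
    (x₀ : H) (hx₀ : g x₀ ≠ ⊤)
    (M : ℝ) (hM : M = max 0 (g x₀).toReal + 2 * ‖x₀‖ ^ 2 + 1 / 2)
    (μ₀ : ℝ) (hμ₀ : μ₀ = min (1 / (2 * θ)) (1 / (1 + θ)))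
    (μ : ℝ) (hμ0 : 0 < μ) (hμ : μ < μ₀) (x y : H)
    (hy : ∀ w : H, g y + ((1 / (2 * μ) * ‖y - x‖ ^ 2 : ℝ) : EReal) ≤
      g w + ((1 / (2 * μ) * ‖w - x‖ ^ 2 : ℝ) : EReal)) :
    ‖y‖ ^ 2 ≤ 4 * (M + 5 * ‖x‖ ^ 2) := by
  have hθ1 : 0 < 1 + θ := by linarith
  have hμθ : μ * θ < 1 / 2 := by
    have h1 : μ < 1 / (2 * θ) := lt_of_lt_of_le hμ (hμ₀ ▸ min_le_left _ _)
    have := mul_lt_mul_of_pos_right h1 hθ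
    rw [div_mul_eq_mul_div, one_mul] at this
    calc μ * θ < θ / (2 * θ) := this
      _ = 1 / 2 := by field_simp
  have hμ1 : μ * (1 + θ) < 1 := by
    have h1 : μ < 1 / (1 + θ) := lt_of_lt_of_le hμ (hμ₀ ▸ min_le_right _ _)
    calc μ * (1 + θ) < 1 / (1 + θ) * (1 + θ) := mul_lt_mul_of_pos_right h1 hθ1
      _ = 1 := by field_simp
  have hkey := hy x₀
  have hgx₀ : g x₀ = ((g x₀).toReal : EReal) := (EReal.coe_toReal hx₀ (hbot x₀)).symm
  have hytop : g y ≠ ⊤ := by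
    intro h
    rw [h, hgx₀] at hkey
    rw [EReal.top_add_coe, ← EReal.coe_add] at hkey
    exact EReal.coe_ne_top _ (top_le_iff.mp hkey)
  have hgy : g y = ((g y).toReal : EReal) := (EReal.coe_toReal hytop (hbot y)).symm
  set a := (g y).toReal with ha
  set b := (g x₀).toReal with hb
  have key : a + 1 / (2 * μ) * ‖y - x‖ ^ 2 ≤ b + 1 / (2 * μ) * ‖x₀ - x‖ ^ 2 := by
    rw [hgy, hgx₀, ← EReal.coe_add, ← EReal.coe_add, EReal.coe_le_coe_iff] at hkey
    exact hkey
  have lb : -(θ / 2) * (1 + ‖y‖ ^ 2) ≤ a := by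
    have h := hlb y
    rw [hgy, EReal.coe_le_coe_iff] at h
    exact h
  have h2μ : (0 : ℝ) < 2 * μ := by linarith
  have key2 : 2 * μ * a + ‖y - x‖ ^ 2 ≤ 2 * μ * b + ‖x₀ - x‖ ^ 2 := by
    have h := mul_le_mul_of_nonneg_left key h2μ.le
    have hne : (2 * μ) ≠ 0 := ne_of_gt h2μ
    field_simp at h
    linarith
  have hn1 : (‖y‖ - ‖x‖) ^ 2 ≤ ‖y - x‖ ^ 2 := by
    have h := abs_norm_sub_norm_le y x
    nlinarith [abs_nonneg (‖y‖ - ‖x‖), sq_abs (‖y‖ - ‖x‖), norm_nonneg (y - x)]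
  have hn2 : ‖x₀ - x‖ ^ 2 ≤ (‖x₀‖ + ‖x‖) ^ 2 := by
    have h := norm_sub_le x₀ x
    nlinarith [norm_nonneg (x₀ - x), norm_nonneg x₀, norm_nonneg x]
  set t := ‖y‖ with ht
  set s := ‖x‖ with hs
  set r := ‖x₀‖ with hr
  set m := max 0 b with hm
  have hm0 : 0 ≤ m := le_max_left _ _
  have hbm : b ≤ m := le_max_right _ _
  have hβpos : (1 : ℝ) / 2 < 1 - μ * θ := by linarith
  have hμβ : μ < 1 - μ * θ := by nlinarith
  have hA : (1 - μ * θ) * t ^ 2 ≤ 2 * μ * m + 2 * r ^ 2 + s ^ 2 + μ * θ + 2 * t * s := by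
    have hab : 2 * μ * b ≤ 2 * μ * m := by nlinarith
    have lb2 := mul_le_mul_of_nonneg_left lb h2μ.le
    nlinarith [key2, hn1, hn2, lb2, hab, sq_nonneg (r - s)]
  have h1 : (1 - μ * θ) ^ 2 * t ^ 2 ≤ 4 * (1 - μ * θ) * μ * m + 4 * (1 - μ * θ) * r ^ 2
      + (2 * (1 - μ * θ) + 4) * s ^ 2 + 2 * (1 - μ * θ) * μ * θ := by
    have hA2 := mul_le_mul_of_nonneg_left hA (by linarith : (0:ℝ) ≤ 2 * (1 - μ * θ))
    nlinarith [hA2, sq_nonneg ((1 - μ * θ) * t - 2 * s)]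
  have h2 : 4 * (1 - μ * θ) * μ * m ≤ 4 * (1 - μ * θ) ^ 2 * m := by
    nlinarith [mul_nonneg (mul_nonneg (by linarith : (0:ℝ) ≤ 1 - μ * θ) hm0)
      (by linarith : (0:ℝ) ≤ (1 - μ * θ) - μ)]
  have h3 : 4 * (1 - μ * θ) * r ^ 2 ≤ 8 * (1 - μ * θ) ^ 2 * r ^ 2 := by
    nlinarith [mul_nonneg (sq_nonneg r)
      (mul_nonneg (by linarith : (0:ℝ) ≤ 1 - μ * θ) (by linarith : (0:ℝ) ≤ 2 * (1 - μ * θ) - 1))]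
  have h4 : (2 * (1 - μ * θ) + 4) * s ^ 2 ≤ 20 * (1 - μ * θ) ^ 2 * s ^ 2 := by
    nlinarith [mul_nonneg (sq_nonneg s)
      (mul_nonneg (by linarith : (0:ℝ) ≤ 2 * (1 - μ * θ) - 1)
        (by linarith : (0:ℝ) ≤ 10 * (1 - μ * θ) + 4))]
  have h5 : 2 * (1 - μ * θ) * μ * θ ≤ 2 * (1 - μ * θ) ^ 2 := by
    nlinarith [mul_nonneg (by linarith : (0:ℝ) ≤ 1 - μ * θ)
      (by linarith : (0:ℝ) ≤ 2 * (1 - μ * θ) - 1)]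
  have hfin : t ^ 2 * (1 - μ * θ) ^ 2 ≤
      (4 * m + 8 * r ^ 2 + 20 * s ^ 2 + 2) * (1 - μ * θ) ^ 2 := by
    linarith [h1, h2, h3, h4, h5]
  have hfin2 : t ^ 2 ≤ 4 * m + 8 * r ^ 2 + 20 * s ^ 2 + 2 :=
    le_of_mul_le_mul_right hfin (by positivity)
  rw [hM]
  linarith
end
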